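/- Let $V$ be a finite set with a metric $w$ and greedy farthest-point ordering $v_1,\dots,v_n$ with $V_i = \{v_1,\dots,v_i\}$. Then for any set $S \subseteq V$ with $|S| = s \ge 2$, either there exist $x \in S$ and $y \in V_{s-1} \cap S$ with $w(x,y) \le w_{V_s}$, or there exist distinct $x, x' \in S$ with $w(x,x') \le 2 w_{V_s}$. In particular $w_S \le 2 w_{V_s}$, where $w_T = \min_{i\neq j \in T} w(i,j)$. -/
import Mathlib
set_option linter.unusedSectionVars false


open Finset

/-- `wS S` is the minimum distance between two distinct points of `S`
(with the convention `wS S = 0` if `S` has fewer than two points). -/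
noncomputable def wS {V : Type*} [MetricSpace V] (S : Finset V) : ℝ :=
  sInf {d | ∃ i ∈ S, ∃ j ∈ S, i ≠ j ∧ d = dist i j}

/-- The first `k` points of the ordering `v`. -/
noncomputable def Vset {V : Type*} [DecidableEq V] {n : ℕ} (v : Fin n ≃ V) (k : ℕ) : Finset V :=
  (Finset.univ.filter (fun j : Fin n => (j : ℕ) < k)).image v

section Aux

variable {V : Type*} [DecidableEq V] [MetricSpace V] {n : ℕ} (v : Fin n ≃ V)

lemma mem_Vset {x : V} {k : ℕ} : x ∈ Vset v k ↔ ((v.symm x : ℕ) < k) := by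
  simp only [Vset, Finset.mem_image, Finset.mem_filter, Finset.mem_univ, true_and]
  constructor
  · rintro ⟨j, hj, rfl⟩; simpa using hj
  · intro h; exact ⟨v.symm x, h, v.apply_symm_apply x⟩

lemma Vset_mono {k k' : ℕ} (h : k ≤ k') : Vset v k ⊆ Vset v k' := by
  intro x hx
  rw [mem_Vset] at hx ⊢
  omega

lemma card_Vset {k : ℕ} (h : k ≤ n) : (Vset v k).card = k := by
  rw [Vset, Finset.card_image_of_injective _ v.injective]
  have himg : ((Finset.univ.filter (fun j : Fin n => (j : ℕ) < k)).image Fin.val)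
      = Finset.range k := by
    ext m
    simp only [Finset.mem_image, Finset.mem_filter, Finset.mem_univ, true_and,
      Finset.mem_range]
    constructor
    · rintro ⟨j, hj, rfl⟩; exact hj
    · intro hm; exact ⟨⟨m, lt_of_lt_of_le hm h⟩, hm, rfl⟩
  have hc := Finset.card_image_of_injective
    (Finset.univ.filter (fun j : Fin n => (j : ℕ) < k)) Fin.val_injective
  rw [himg, Finset.card_range] at hc
  omega

lemma bddBelow_distSet (u : V) (T : Finset V) :
    BddBelow {d | ∃ x ∈ T, d = dist u x} := by
  refine ⟨0, ?_⟩
  rintro d ⟨x, -, rfl⟩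
  exact dist_nonneg

lemma sInf_dist_mem (u : V) {T : Finset V} (hT : T.Nonempty) :
    ∃ y ∈ T, dist u y = sInf {d | ∃ x ∈ T, d = dist u x} := by
  have hset : {d | ∃ x ∈ T, d = dist u x} = ((T.image (dist u) : Finset ℝ) : Set ℝ) := by
    ext d
    simp [eq_comm]
  have hfin : {d | ∃ x ∈ T, d = dist u x}.Finite := by
    rw [hset]; exact (T.image (dist u)).finite_toSet
  obtain ⟨z, hz⟩ := hT
  have hne : {d | ∃ x ∈ T, d = dist u x}.Nonempty := ⟨dist u z, z, hz, rfl⟩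
  obtain ⟨x, hx, hd⟩ := hne.csInf_mem hfin
  exact ⟨x, hx, hd.symm⟩

end Aux

/-- For a greedy farthest-point ordering of a finite metric space and any `S` with
`|S| = s ≥ 2`: either some `x ∈ S` is within distance `wS (V_s)` of a point
`y ∈ V_{s-1} ∩ S`, or two distinct points of `S` are within distance `2 wS (V_s)`;
in particular `wS S ≤ 2 wS (V_s)`. -/
theorem stmt1 {V : Type*} [DecidableEq V] [Fintype V] [MetricSpace V] {n : ℕ}
    (hcard : Fintype.card V = n) (v : Fin n ≃ V)
    (greedy : ∀ i : Fin n, ∀ u : V, u ∉ Vset v i →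
      sInf {d | ∃ x ∈ Vset v (i : ℕ), d = dist u x} ≤
        sInf {d | ∃ x ∈ Vset v (i : ℕ), d = dist (v i) x})
    (S : Finset V) (hS : 2 ≤ S.card) :
    ((∃ x ∈ S, ∃ y ∈ Vset v (S.card - 1) ∩ S, dist x y ≤ wS (Vset v S.card)) ∨
      (∃ x ∈ S, ∃ x' ∈ S, x ≠ x' ∧ dist x x' ≤ 2 * wS (Vset v S.card))) ∧
    wS S ≤ 2 * wS (Vset v S.card) := by
  set s := S.card with hs
  have hsn : s ≤ n := by
    have := Finset.card_le_univ S
    rw [hcard] at this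
    omega
  set r := wS (Vset v s) with hr
  have i₀lt : s - 1 < n := by omega
  set i₀ : Fin n := ⟨s - 1, i₀lt⟩ with hi₀
  set D : ℝ := sInf {d | ∃ x ∈ Vset v (s - 1), d = dist (v i₀) x} with hD
  -- the chain lemma
  have chain : ∀ a b : Fin n, (a : ℕ) < (b : ℕ) → (b : ℕ) < s → D ≤ dist (v b) (v a) := by
    intro a b hab hbs
    have hva : v a ∈ Vset v (b : ℕ) := by
      rw [mem_Vset, v.symm_apply_apply]; exact hab
    have step1 : D ≤ sInf {d | ∃ x ∈ Vset v (b : ℕ), d = dist (v i₀) x} := by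
      refine csInf_le_csInf (bddBelow_distSet _ _) ⟨dist (v i₀) (v a), v a, hva, rfl⟩ ?_
      rintro d ⟨x, hx, rfl⟩
      exact ⟨x, Vset_mono v (by omega) hx, rfl⟩
    have step2 : sInf {d | ∃ x ∈ Vset v (b : ℕ), d = dist (v i₀) x}
        ≤ sInf {d | ∃ x ∈ Vset v (b : ℕ), d = dist (v b) x} := by
      rcases eq_or_lt_of_le (show (b : ℕ) ≤ s - 1 by omega) with heq | hlt
      · have : i₀ = b := by
          apply Fin.ext
          simp [hi₀, heq]
        rw [this]
      · apply greedy b (v i₀)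
        rw [mem_Vset, v.symm_apply_apply]
        simp only [hi₀]
        omega
    have step3 : sInf {d | ∃ x ∈ Vset v (b : ℕ), d = dist (v b) x} ≤ dist (v b) (v a) :=
      csInf_le (bddBelow_distSet _ _) ⟨v a, hva, rfl⟩
    exact step1.trans (step2.trans step3)
  -- r is at least D
  have hVs_card : (Vset v s).card = s := card_Vset v hsn
  have rD : D ≤ r := by
    rw [hr, wS]
    apply le_csInf
    · obtain ⟨x, hx, y, hy, hxy⟩ := Finset.one_lt_card.mp (by omega : 1 < (Vset v s).card)
      exact ⟨dist x y, x, hx, y, hy, hxy, rfl⟩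
    · rintro d ⟨x, hx, y, hy, hxy, rfl⟩
      set a := v.symm x with ha
      set b := v.symm y with hb
      have hxa : v a = x := v.apply_symm_apply x
      have hyb : v b = y := v.apply_symm_apply y
      have has : (a : ℕ) < s := (mem_Vset v).mp hx
      have hbs : (b : ℕ) < s := (mem_Vset v).mp hy
      have hne : a ≠ b := fun h => hxy (by rw [← hxa, ← hyb, h])
      rcases lt_or_gt_of_ne (fun h => hne (Fin.ext h)) with h | h
      · have := chain a b h hbs
        rw [hxa, hyb, dist_comm] at this
        exact this
      · have := chain b a h has
        rw [hxa, hyb] at this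
        exact this
  have rnonneg : (0 : ℝ) ≤ r := by
    rw [hr, wS]
    apply Real.sInf_nonneg
    rintro d ⟨x, -, y, -, -, rfl⟩
    exact dist_nonneg
  -- every point is within r of Vset v (s-1)
  have hVs1_card : (Vset v (s - 1)).card = s - 1 := card_Vset v (by omega)
  have hVs1_ne : (Vset v (s - 1)).Nonempty := by
    rw [← Finset.card_pos, hVs1_card]; omega
  have cover : ∀ u : V, ∃ y, y ∈ Vset v (s - 1) ∧ dist u y ≤ r := by
    intro u
    by_cases hu : u ∈ Vset v (s - 1)
    · exact ⟨u, hu, by simpa using rnonneg⟩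
    · obtain ⟨y, hy, hdy⟩ := sInf_dist_mem u hVs1_ne
      refine ⟨y, hy, ?_⟩
      rw [hdy]
      have hg := greedy i₀ u (by simpa [hi₀] using hu)
      simp only [hi₀] at hg
      exact le_trans hg rD
  choose f hf1 hf2 using cover
  obtain ⟨x, hx, x', hx', hxx', hfe⟩ :=
    Finset.exists_ne_map_eq_of_card_lt_of_maps_to
      (by rw [hVs1_card]; omega : (Vset v (s - 1)).card < S.card)
      (fun a _ => hf1 a)
  have hdist : dist x x' ≤ 2 * r := by
    calc dist x x' ≤ dist x (f x) + dist (f x) x' := dist_triangle _ _ _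
      _ = dist x (f x) + dist x' (f x') := by rw [hfe, dist_comm (f x') x']
      _ ≤ r + r := add_le_add (hf2 x) (hf2 x')
      _ = 2 * r := by ring
  refine ⟨Or.inr ⟨x, hx, x', hx', hxx', hdist⟩, ?_⟩
  have : wS S ≤ dist x x' := by
    apply csInf_le
    · refine ⟨0, ?_⟩
      rintro d ⟨i, -, j, -, -, rfl⟩
      exact dist_nonneg
    · exact ⟨x, hx, x', hx', hxx', rfl⟩
  exact this.trans hdist
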